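/- arXiv:1411.4906 — 4 statements merged into one kernel-verified Lean document; each statement's English description precedes it below -/
import Mathlib

section
/- Let X be a pure k-dimensional simplicial complex. Then Σ_{F ∈ X_{k−2}} Δ^{up,F}_{k−1}(X) = Δ^up_{k−1}(X) + (k−1)·I, where Δ^{up,F}_{k−1}(X) := ρ_F Δ^up_{k−1}(X) ρ_F and ρ_F is the diagonal 0/1 projection onto (k−1)-faces containing F. -/
/-- Signed incidence number `[F : G]`. -/
def incSign {n : ℕ} (F G : Finset (Fin n)) : ℤ :=
  if G ⊆ F ∧ F.card = G.card + 1 then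
    ∑ v ∈ F \ G, (-1 : ℤ) ^ (G.filter (fun x => x < v)).card
  else 0

/-- The `(k−1)`-faces of a pure `k`-dimensional complex with set `K` of `k`-faces:
the `k`-element sets contained in some `k`-face. -/
abbrev Faces (n k : ℕ) (K : Finset (Finset (Fin n))) :=
  {G : Finset (Fin n) // G.card = k ∧ ∃ H ∈ K, G ⊆ H}

/-- Garland's decomposition: for a pure `k`-dimensional complex `X` (with `k`-faces `K`),
`Σ_{F ∈ X_{k−2}} ρ_F Δ^up_{k−1} ρ_F = Δ^up_{k−1} + (k−1)·I`, where
`Δ^up_{k−1} = I − D⁻¹ A_{k−1}` is the normalized up-Laplacian on `(k−1)`-faces and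
`ρ_F` is the diagonal 0/1 projection onto the `(k−1)`-faces containing `F`. -/
theorem stmt9 (n k : ℕ) (hk : 1 ≤ k)
    (K : Finset (Finset (Fin n))) (hK : ∀ H ∈ K, H.card = k + 1)
    (deg : Finset (Fin n) → ℕ) (hdeg : ∀ G, deg G = (K.filter (fun H => G ⊆ H)).card)
    (A Δ : Matrix (Faces n k K) (Faces n k K) ℝ)
    (hA : ∀ G G', A G G' = if G.1 ≠ G'.1 ∧ (G.1 ∩ G'.1).card = k - 1 ∧ G.1 ∪ G'.1 ∈ K
        then ((incSign G.1 (G.1 ∩ G'.1) * incSign G'.1 (G.1 ∩ G'.1) : ℤ) : ℝ) else 0)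
    (hΔ : Δ = 1 - Matrix.diagonal (fun G => ((deg G.1 : ℝ))⁻¹) * A)
    (ρ : Finset (Fin n) → Matrix (Faces n k K) (Faces n k K) ℝ)
    (hρ : ∀ F, ρ F = Matrix.diagonal (fun G => if F ⊆ G.1 then (1 : ℝ) else 0)) :
    ∑ F ∈ Finset.univ.filter (fun F : Finset (Fin n) => F.card = k - 1 ∧ ∃ H ∈ K, F ⊆ H),
        ρ F * Δ * ρ F
      = Δ + ((k : ℝ) - 1) • (1 : Matrix (Faces n k K) (Faces n k K) ℝ) := by
  classical
  subst hΔ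
  obtain ⟨m, rfl⟩ : ∃ m, k = m + 1 := ⟨k - 1, (Nat.succ_pred_eq_of_pos hk).symm⟩
  set D := Matrix.diagonal (fun G : Faces n (m+1) K => ((deg G.1 : ℝ))⁻¹) with hD
  ext G G'
  rw [Matrix.sum_apply]
  have key : ∀ F, (ρ F * (1 - D * A) * ρ F) G G'
      = if F ⊆ G.1 ∧ F ⊆ G'.1 then (1 - D * A) G G' else 0 := by
    intro F
    rw [hρ, Matrix.mul_diagonal, Matrix.diagonal_mul]
    by_cases h1 : F ⊆ G.1 <;> by_cases h2 : F ⊆ G'.1 <;> simp [h1, h2]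
  simp only [key]
  rw [← Finset.sum_filter, Finset.filter_filter, Finset.sum_const, nsmul_eq_mul]
  by_cases hGG : G = G'
  · subst hGG
    have hA0 : A G G = 0 := by rw [hA]; simp
    have hcard : (Finset.univ.filter
        (fun F : Finset (Fin n) => (F.card = m + 1 - 1 ∧ ∃ H ∈ K, F ⊆ H) ∧ F ⊆ G.1 ∧ F ⊆ G.1)).card
        = m + 1 := by
      have hset : Finset.univ.filter
          (fun F : Finset (Fin n) => (F.card = m + 1 - 1 ∧ ∃ H ∈ K, F ⊆ H) ∧ F ⊆ G.1 ∧ F ⊆ G.1)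
          = Finset.powersetCard m G.1 := by
        ext F
        simp only [Finset.mem_filter, Finset.mem_univ, true_and, Finset.mem_powersetCard,
          Nat.add_sub_cancel]
        constructor
        · rintro ⟨⟨hc, -⟩, hs, -⟩; exact ⟨hs, hc⟩
        · rintro ⟨hs, hc⟩
          obtain ⟨H, hH, hGH⟩ := G.2.2
          exact ⟨⟨hc, H, hH, hs.trans hGH⟩, hs, hs⟩
      rw [hset, Finset.card_powersetCard, G.2.1, Nat.choose_succ_self_right]
    rw [hcard]
    simp only [Matrix.sub_apply, Matrix.one_apply_eq, Matrix.add_apply, Matrix.smul_apply,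
      Matrix.diagonal_mul, hA0, hD, mul_zero, sub_zero, smul_eq_mul]
    push_cast
    ring
  · have hv : G.1 ≠ G'.1 := fun h => hGG (Subtype.ext h)
    by_cases hA0 : A G G' = 0
    · have hΔ0 : (1 - D * A) G G' = 0 := by
        simp [Matrix.sub_apply, Matrix.one_apply_ne hGG, hD, Matrix.diagonal_mul, hA0]
      simp [hΔ0, Matrix.add_apply, Matrix.smul_apply, Matrix.one_apply_ne hGG]
    · have hcond : (G.1 ∩ G'.1).card = m + 1 - 1 ∧ G.1 ∪ G'.1 ∈ K := by
        by_contra hc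
        apply hA0
        rw [hA, if_neg]
        rintro ⟨-, h2, h3⟩
        exact hc ⟨h2, h3⟩
      have hfil : Finset.univ.filter
          (fun F : Finset (Fin n) => (F.card = m + 1 - 1 ∧ ∃ H ∈ K, F ⊆ H) ∧ F ⊆ G.1 ∧ F ⊆ G'.1)
          = {G.1 ∩ G'.1} := by
        ext F
        simp only [Finset.mem_filter, Finset.mem_univ, true_and, Finset.mem_singleton]
        constructor
        · rintro ⟨⟨hc', -⟩, h1, h2⟩
          exact Finset.eq_of_subset_of_card_le (Finset.subset_inter h1 h2)
            (by rw [hcond.1, hc'])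
        · rintro rfl
          exact ⟨⟨hcond.1, G.1 ∪ G'.1, hcond.2, Finset.inter_subset_union⟩,
            Finset.inter_subset_left, Finset.inter_subset_right⟩
      rw [hfil]
      simp [Matrix.add_apply, Matrix.smul_apply, Matrix.one_apply_ne hGG]
end

section
/- Let X be a pure k-dimensional complex, F ∈ X_{k−2}, and u, v vertices of lk(F,X). Writing F_u = F∪{u} and F_v = F∪{v}, the restricted normalized Laplacian satisfies (ρ_F Δ^up_{k−1}(X) ρ_F)_{F_u, F_v} = [F_u : F]·[F_v : F]·(Δ(lk F))_{u,v}, where Δ(lk F) is the normalized graph Laplacian of the link graph. Consequently ⟨ρ_F Δ^up_{k−1}(X) ρ_F f, f⟩ = ⟨Δ(lk F) f_F, f_F⟩ for every f ∈ C^{k−1}(X;R), where f_F(u) := [F∪{u} : F] f(F∪{u}). -/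
/-- The vertices of the link of a `(k−2)`-face `F`. -/
abbrev LinkVerts (n k : ℕ) (K : Finset (Finset (Fin n))) (F : Finset (Fin n)) :=
  {u : Fin n // u ∉ F ∧ ∃ H ∈ K, insert u F ⊆ H}

open Matrix
open Function (Injective)

lemma incSign_insert {n : ℕ} {F : Finset (Fin n)} {u : Fin n} (hu : u ∉ F) :
    incSign (insert u F) F = (-1 : ℤ) ^ (F.filter (fun x => x < u)).card := by
  rw [incSign, if_pos ⟨Finset.subset_insert _ _, Finset.card_insert_of_notMem hu⟩,
    Finset.insert_sdiff_cancel hu, Finset.sum_singleton]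

lemma incSign_insert_mul_self {n : ℕ} {F : Finset (Fin n)} {u : Fin n} (hu : u ∉ F) :
    (incSign (insert u F) F : ℝ) * incSign (insert u F) F = 1 := by
  rw [incSign_insert hu]
  push_cast
  rw [← mul_pow]
  norm_num

lemma Finset.insert_inter_insert_of_ne {α : Type*} [DecidableEq α] {a b : α} (s : Finset α)
    (hab : a ≠ b) : insert a s ∩ insert b s = s := by
  ext x
  simp only [Finset.mem_inter, Finset.mem_insert]
  constructor
  · rintro ⟨rfl | hx, rfl | hx'⟩ <;> first | exact absurd rfl hab | assumption
  · exact fun hx => ⟨Or.inr hx, Or.inr hx⟩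

section SignedRestriction

variable {l m R : Type*} [Fintype l] [Fintype m] [CommRing R]

lemma one_sub_diagonal_mul_apply_of_signed [DecidableEq l] [DecidableEq m] (e : l → m)
    (he : Injective e) (s : l → R)
    (hs : ∀ u, s u * s u = 1) (d : m → R) (A : Matrix m m R) (B : Matrix l l R)
    (hAB : ∀ u v, A (e u) (e v) = s u * s v * B u v) (u v : l) :
    (1 - diagonal d * A) (e u) (e v) = s u * s v * (1 - diagonal (d ∘ e) * B) u v := by
  simp only [Matrix.sub_apply, diagonal_mul, hAB, one_apply, he.eq_iff, Function.comp_apply]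
  split_ifs with huv
  · subst huv
    linear_combination -hs u
  · ring

lemma mulVec_apply_of_signed (e : l → m) (he : Injective e) (s : l → R) (M : Matrix m m R)
    (N : Matrix l l R) (hM : ∀ i j, M i j ≠ 0 → i ∈ Set.range e ∧ j ∈ Set.range e)
    (hMN : ∀ u v, M (e u) (e v) = s u * s v * N u v) (f : m → R) (u : l) :
    (M *ᵥ f) (e u) = s u * (N *ᵥ fun v => s v * f (e v)) u := by
  have hsum : ∑ j, M (e u) j * f j = ∑ v, M (e u) (e v) * f (e v) := by
    refine (Fintype.sum_of_injective e he _ _ (fun j hj => ?_) fun _ => rfl).symm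
    by_contra hne
    exact hj (hM _ _ (left_ne_zero_of_mul hne)).2
  simp only [mulVec, dotProduct, hsum, hMN, Finset.mul_sum]
  exact Finset.sum_congr rfl fun v _ => by ring

lemma sum_mul_mulVec_mul_of_signed (e : l → m) (he : Injective e) (s : l → R) (w : m → R)
    (M : Matrix m m R) (N : Matrix l l R)
    (hM : ∀ i j, M i j ≠ 0 → i ∈ Set.range e ∧ j ∈ Set.range e)
    (hMN : ∀ u v, M (e u) (e v) = s u * s v * N u v) (f : m → R) :
    ∑ i, w i * (M *ᵥ f) i * f i
      = ∑ u, w (e u) * (N *ᵥ fun v => s v * f (e v)) u * (s u * f (e u)) := by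
  have hrow : ∀ i ∉ Set.range e, (M *ᵥ f) i = 0 := fun i hi =>
    Finset.sum_eq_zero fun j _ => by
      by_contra hne
      exact hi (hM _ _ (left_ne_zero_of_mul hne)).1
  rw [← Fintype.sum_of_injective e he _ _ (fun i hi => by rw [hrow i hi, mul_zero, zero_mul])
    fun _ => rfl]
  refine Finset.sum_congr rfl fun u _ => ?_
  rw [mulVec_apply_of_signed e he s M N hM hMN]
  ring

end SignedRestriction

section Link

variable {n k : ℕ} {K : Finset (Finset (Fin n))} {F : Finset (Fin n)}
  {ι : LinkVerts n k K F → Faces n k K}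

lemma injective_of_val_eq_insert (hι : ∀ u, (ι u).1 = insert u.1 F) : Injective ι := by
  intro a b hab
  have ha : a.1 ∈ insert b.1 F := by
    rw [← hι b, ← hab, hι a]
    exact Finset.mem_insert_self _ _
  exact Subtype.ext ((Finset.mem_insert.mp ha).resolve_right a.2.1)

lemma mem_range_iff_subset_of_val_eq_insert (hF : F.card + 1 = k)
    (hι : ∀ u, (ι u).1 = insert u.1 F) (G : Faces n k K) : G ∈ Set.range ι ↔ F ⊆ G.1 := by
  constructor
  · rintro ⟨u, rfl⟩
    rw [hι]
    exact Finset.subset_insert _ _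
  · intro hFG
    obtain ⟨u, hu⟩ : ∃ u, G.1 \ F = {u} := Finset.card_eq_one.mp (by
      rw [Finset.card_sdiff_of_subset hFG, G.2.1]
      omega)
    have huF : u ∉ F := (Finset.mem_sdiff.mp (hu ▸ Finset.mem_singleton_self u)).2
    have hins : insert u F = G.1 := by
      rw [Finset.insert_eq, ← hu, Finset.sdiff_union_of_subset hFG]
    obtain ⟨H, hH, hGH⟩ := G.2.2
    exact ⟨⟨u, huF, H, hH, hins ▸ hGH⟩, Subtype.ext ((hι _).trans hins)⟩

lemma upperAdj_apply_of_val_eq_insert (hF : F.card = k - 1) (hι : ∀ u, (ι u).1 = insert u.1 F)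
    (A : Matrix (Faces n k K) (Faces n k K) ℝ)
    (hA : ∀ G G', A G G' = if G.1 ≠ G'.1 ∧ (G.1 ∩ G'.1).card = k - 1 ∧ G.1 ∪ G'.1 ∈ K
        then ((incSign G.1 (G.1 ∩ G'.1) * incSign G'.1 (G.1 ∩ G'.1) : ℤ) : ℝ) else 0)
    (Alk : Matrix (LinkVerts n k K F) (LinkVerts n k K F) ℝ)
    (hAlk : ∀ u v, Alk u v = if u ≠ v ∧ insert u.1 (insert v.1 F) ∈ K then (1 : ℝ) else 0)
    (u v : LinkVerts n k K F) :
    A (ι u) (ι v)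
      = (incSign (insert u.1 F) F : ℝ) * (incSign (insert v.1 F) F : ℝ) * Alk u v := by
  rw [hA, hAlk, hι, hι]
  by_cases huv : u = v
  · simp [huv]
  have hne : u.1 ≠ v.1 := fun h => huv (Subtype.ext h)
  have hunion : insert u.1 F ∪ insert v.1 F = insert u.1 (insert v.1 F) := by
    rw [Finset.insert_union, Finset.union_insert, Finset.union_self]
  have hins : insert u.1 F ≠ insert v.1 F := fun h =>
    hne ((Finset.mem_insert.mp (h ▸ Finset.mem_insert_self u.1 F)).resolve_right u.2.1)
  rw [Finset.insert_inter_insert_of_ne F hne, hunion]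
  by_cases hK : insert u.1 (insert v.1 F) ∈ K
  · rw [if_pos ⟨hins, hF, hK⟩, if_pos ⟨huv, hK⟩]
    push_cast
    ring
  · rw [if_neg fun h => hK h.2.2, if_neg fun h => hK h.2, mul_zero]

end Link

theorem stmt10_general (n k : ℕ) (hk : 2 ≤ k)
    (K : Finset (Finset (Fin n)))
    (deg : Finset (Fin n) → ℕ)
    (A Δ : Matrix (Faces n k K) (Faces n k K) ℝ)
    (hA : ∀ G G', A G G' = if G.1 ≠ G'.1 ∧ (G.1 ∩ G'.1).card = k - 1 ∧ G.1 ∪ G'.1 ∈ K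
        then ((incSign G.1 (G.1 ∩ G'.1) * incSign G'.1 (G.1 ∩ G'.1) : ℤ) : ℝ) else 0)
    (hΔ : Δ = 1 - Matrix.diagonal (fun G => ((deg G.1 : ℝ))⁻¹) * A)
    (F : Finset (Fin n)) (hF : F.card = k - 1)
    (ρF : Matrix (Faces n k K) (Faces n k K) ℝ)
    (hρ : ρF = Matrix.diagonal (fun G => if F ⊆ G.1 then (1 : ℝ) else 0))
    (ι : LinkVerts n k K F → Faces n k K) (hι : ∀ u, (ι u).1 = insert u.1 F)
    (Alk Δlk : Matrix (LinkVerts n k K F) (LinkVerts n k K F) ℝ)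
    (hAlk : ∀ u v, Alk u v =
        if u ≠ v ∧ insert u.1 (insert v.1 F) ∈ K then (1 : ℝ) else 0)
    (hΔlk : Δlk = 1 - Matrix.diagonal (fun u => ((deg (insert u.1 F) : ℝ))⁻¹) * Alk) :
    (∀ u v, (ρF * Δ * ρF) (ι u) (ι v)
        = ((incSign (insert u.1 F) F : ℝ) * (incSign (insert v.1 F) F : ℝ)) * Δlk u v) ∧
    (∀ f : Faces n k K → ℝ,
      ∑ G, (deg G.1 : ℝ) * ((ρF * Δ * ρF).mulVec f) G * f G
        = ∑ u, (deg (insert u.1 F) : ℝ)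
            * (Δlk.mulVec (fun w => (incSign (insert w.1 F) F : ℝ) * f (ι w))) u
            * ((incSign (insert u.1 F) F : ℝ) * f (ι u))) := by
  have hinj := injective_of_val_eq_insert hι
  have hrange := mem_range_iff_subset_of_val_eq_insert (by omega) hι
  have hΔι : ∀ u v, Δ (ι u) (ι v)
      = (incSign (insert u.1 F) F : ℝ) * (incSign (insert v.1 F) F : ℝ) * Δlk u v := by
    have hdeg : (fun G : Faces n k K => ((deg G.1 : ℝ))⁻¹) ∘ ι
        = fun u => ((deg (insert u.1 F) : ℝ))⁻¹ :=
      funext fun u => by simp only [Function.comp_apply, hι]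
    intro u v
    rw [hΔ, hΔlk, ← hdeg]
    exact one_sub_diagonal_mul_apply_of_signed ι hinj _ (fun u => incSign_insert_mul_self u.2.1)
      _ A Alk (upperAdj_apply_of_val_eq_insert hF hι A hA Alk hAlk) u v
  have hρΔρ : ∀ G G', (ρF * Δ * ρF) G G' = if F ⊆ G.1 ∧ F ⊆ G'.1 then Δ G G' else 0 := by
    intro G G'
    rw [hρ, mul_diagonal, diagonal_mul]
    by_cases hG : F ⊆ G.1 <;> by_cases hG' : F ⊆ G'.1 <;> simp [hG, hG']
  have hMN : ∀ u v, (ρF * Δ * ρF) (ι u) (ι v)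
      = (incSign (insert u.1 F) F : ℝ) * (incSign (insert v.1 F) F : ℝ) * Δlk u v := fun u v => by
    rw [hρΔρ, if_pos ⟨(hrange _).mp ⟨u, rfl⟩, (hrange _).mp ⟨v, rfl⟩⟩, hΔι]
  have hsupp : ∀ G G', (ρF * Δ * ρF) G G' ≠ 0 → G ∈ Set.range ι ∧ G' ∈ Set.range ι := by
    intro G G' h
    rw [hρΔρ] at h
    rw [hrange, hrange]
    by_contra hc
    exact h (if_neg hc)
  refine ⟨hMN, fun f => ?_⟩
  rw [sum_mul_mulVec_mul_of_signed ι hinj _ _ _ Δlk hsupp hMN]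
  simp only [hι]

/-- Entrywise identification of the restricted normalized Laplacian with the normalized
Laplacian of the link of a `(k−2)`-face `F`:
`(ρ_F Δ^up_{k−1} ρ_F)_{F∪{u}, F∪{v}} = [F∪{u}:F]·[F∪{v}:F]·Δ(lk F)_{u,v}`, and the
corresponding equality of (degree-weighted) quadratic forms
`⟨ρ_F Δ ρ_F f, f⟩ = ⟨Δ(lk F) f_F, f_F⟩` with `f_F(u) = [F∪{u}:F] f(F∪{u})`. -/
theorem stmt10 (n k : ℕ) (hk : 2 ≤ k)
    (K : Finset (Finset (Fin n))) (hK : ∀ H ∈ K, H.card = k + 1)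
    (deg : Finset (Fin n) → ℕ) (hdeg : ∀ G, deg G = (K.filter (fun H => G ⊆ H)).card)
    (A Δ : Matrix (Faces n k K) (Faces n k K) ℝ)
    (hA : ∀ G G', A G G' = if G.1 ≠ G'.1 ∧ (G.1 ∩ G'.1).card = k - 1 ∧ G.1 ∪ G'.1 ∈ K
        then ((incSign G.1 (G.1 ∩ G'.1) * incSign G'.1 (G.1 ∩ G'.1) : ℤ) : ℝ) else 0)
    (hΔ : Δ = 1 - Matrix.diagonal (fun G => ((deg G.1 : ℝ))⁻¹) * A)
    (F : Finset (Fin n)) (hF : F.card = k - 1)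
    (ρF : Matrix (Faces n k K) (Faces n k K) ℝ)
    (hρ : ρF = Matrix.diagonal (fun G => if F ⊆ G.1 then (1 : ℝ) else 0))
    (ι : LinkVerts n k K F → Faces n k K) (hι : ∀ u, (ι u).1 = insert u.1 F)
    (Alk Δlk : Matrix (LinkVerts n k K F) (LinkVerts n k K F) ℝ)
    (hAlk : ∀ u v, Alk u v =
        if u ≠ v ∧ insert u.1 (insert v.1 F) ∈ K then (1 : ℝ) else 0)
    (hΔlk : Δlk = 1 - Matrix.diagonal (fun u => ((deg (insert u.1 F) : ℝ))⁻¹) * Alk) :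
    (∀ u v, (ρF * Δ * ρF) (ι u) (ι v)
        = ((incSign (insert u.1 F) F : ℝ) * (incSign (insert v.1 F) F : ℝ)) * Δlk u v) ∧
    (∀ f : Faces n k K → ℝ,
      ∑ G, (deg G.1 : ℝ) * ((ρF * Δ * ρF).mulVec f) G * f G
        = ∑ u, (deg (insert u.1 F) : ℝ)
            * (Δlk.mulVec (fun w => (incSign (insert w.1 F) F : ℝ) * f (ι w))) u
            * ((incSign (insert u.1 F) F : ℝ) * f (ι u))) :=
  stmt10_general n k hk K deg A Δ hA hΔ F hF ρF hρ ι hι Alk Δlk hAlk hΔlk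
end

section
/- Let X be a k-complex on vertex set [n] with complete (k−1)-skeleton and let b ∈ B^{k−1}(X;R) be a coboundary. Define, for each (k−2)-face F, h_b(F) := Σ_{v ∉ F} [F∪{v} : F] b(F∪{v}). Then for every (k−1)-face H: b(H) = (1/n) Σ_{F ⊂ H, |F|=k−1} [H:F] h_b(F). -/
namespace Stmt14

variable {n : ℕ}

def sgn (F : Finset (Fin n)) (u : Fin n) : ℤ := (-1) ^ (F.filter (fun x => x < u)).card

lemma incSign_insert (F : Finset (Fin n)) (u : Fin n) (hu : u ∉ F) :
    incSign (insert u F) F = sgn F u := by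
  unfold incSign sgn
  rw [if_pos ⟨Finset.subset_insert _ _, Finset.card_insert_of_notMem hu⟩,
    Finset.insert_sdiff_of_notMem _ hu, Finset.sdiff_self,
    Finset.sum_insert (Finset.notMem_empty u), Finset.sum_empty, add_zero]

lemma incSign_eq_zero {F G : Finset (Fin n)} (h : ¬ (G ⊆ F ∧ F.card = G.card + 1)) :
    incSign F G = 0 := if_neg h

lemma sgn_mul_self (F : Finset (Fin n)) (u : Fin n) : sgn F u * sgn F u = 1 := by
  unfold sgn
  rw [← pow_add]
  exact Even.neg_one_pow ⟨_, rfl⟩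

lemma sgn_insert (F : Finset (Fin n)) (w u : Fin n) (hw : w ∉ F) :
    sgn (insert w F) u = (if w < u then -1 else 1) * sgn F u := by
  unfold sgn
  rw [Finset.filter_insert]
  split
  · rw [Finset.card_insert_of_notMem (by simp [hw]), pow_succ]; ring
  · ring

lemma sgn_id (F : Finset (Fin n)) (u v : Fin n) (hu : u ∉ F) (hv : v ∉ F) (huv : u ≠ v) :
    sgn F u * sgn F v = -(sgn (insert u F) v * sgn (insert v F) u) := by
  rw [sgn_insert F u v hu, sgn_insert F v u hv]
  rcases lt_or_gt_of_ne huv with h | h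
  · rw [if_pos h, if_neg (asymm h)]; ring
  · rw [if_neg (asymm h), if_pos h]; ring

lemma exists_insert {F H : Finset (Fin n)} (hFH : F ⊆ H) (hc : H.card = F.card + 1) :
    ∃ u, u ∉ F ∧ H = insert u F := by
  have h1 : (H \ F).card = 1 := by rw [Finset.card_sdiff_of_subset hFH, hc]; omega
  obtain ⟨u, hu⟩ := Finset.card_eq_one.mp h1
  have hu1 : u ∈ H \ F := hu ▸ Finset.mem_singleton_self u
  obtain ⟨huH, huF⟩ := Finset.mem_sdiff.mp hu1
  refine ⟨u, huF, ?_⟩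
  refine (Finset.eq_of_subset_of_card_le (Finset.insert_subset huH hFH) ?_).symm
  rw [Finset.card_insert_of_notMem huF, hc]

lemma sign_identity (F H : Finset (Fin n)) (v : Fin n) (hFH : F ⊆ H)
    (hc : H.card = F.card + 1) (hv : v ∉ H) :
    incSign H F * incSign (insert v F) F
      = -(incSign (insert v H) H * incSign (insert v H) (insert v F)) := by
  obtain ⟨u, huF, rfl⟩ := exists_insert hFH hc
  have huv : u ≠ v := fun h => hv (h ▸ Finset.mem_insert_self u F)
  have hvF : v ∉ F := fun h => hv (Finset.mem_insert_of_mem h)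
  rw [incSign_insert F u huF, incSign_insert F v hvF,
      incSign_insert (insert u F) v hv,
      Finset.insert_comm v u F,
      incSign_insert (insert v F) u (by simp [huF, huv])]
  exact sgn_id F u v huF hvF huv

lemma dd_zero (S F : Finset (Fin n)) (k : ℕ) (hk : 1 ≤ k) (hF : F ⊆ S)
    (hFc : F.card = k - 1) (hS : S.card = k + 1) :
    ∑ G ∈ S.powersetCard k, (incSign S G) * (incSign G F) = 0 := by
  have h2 : (S \ F).card = 2 := by rw [Finset.card_sdiff_of_subset hF, hS, hFc]; omega
  obtain ⟨u, v, huv, hSF⟩ := Finset.card_eq_two.mp h2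
  have huS : u ∈ S \ F := hSF ▸ by simp
  have hvS : v ∈ S \ F := hSF ▸ by simp
  have huF : u ∉ F := (Finset.mem_sdiff.mp huS).2
  have hvF : v ∉ F := (Finset.mem_sdiff.mp hvS).2
  have hSu : S = insert u (insert v F) := by
    refine (Finset.eq_of_subset_of_card_le
      (Finset.insert_subset (Finset.mem_sdiff.mp huS).1
        (Finset.insert_subset (Finset.mem_sdiff.mp hvS).1 hF)) ?_).symm
    rw [Finset.card_insert_of_notMem (by simp [huF, huv]),
        Finset.card_insert_of_notMem hvF, hS, hFc]; omega
  have hmemu : insert u F ∈ S.powersetCard k := by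
    rw [Finset.mem_powersetCard]
    constructor
    · rw [hSu]; intro x hx
      rcases Finset.mem_insert.mp hx with h | h
      · simp [h]
      · simp [h]
    · rw [Finset.card_insert_of_notMem huF, hFc]; omega
  have hmemv : insert v F ∈ S.powersetCard k := by
    rw [Finset.mem_powersetCard]
    constructor
    · rw [hSu]; intro x hx
      rcases Finset.mem_insert.mp hx with h | h
      · simp [h]
      · simp [h]
    · rw [Finset.card_insert_of_notMem hvF, hFc]; omega
  have hne : insert u F ≠ insert v F := by
    intro h
    exact huv (by
      have : u ∈ insert v F := h ▸ Finset.mem_insert_self u F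
      rcases Finset.mem_insert.mp this with h' | h'
      · exact h'
      · exact absurd h' huF)
  rw [Finset.sum_eq_add_of_mem (insert u F) (insert v F) hmemu hmemv hne ?rest]
  · have e1 : incSign S (insert u F) = sgn (insert u F) v := by
      rw [hSu, Finset.insert_comm u v F]
      exact incSign_insert _ v (by simp [hvF, Ne.symm huv])
    have e2 : incSign S (insert v F) = sgn (insert v F) u := by
      rw [hSu]
      exact incSign_insert _ u (by simp [huF, huv])
    rw [e1, e2, incSign_insert F u huF, incSign_insert F v hvF,
        sgn_insert F u v huF, sgn_insert F v u hvF]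
    rcases lt_or_gt_of_ne huv with h | h
    · rw [if_pos h, if_neg (asymm h)]; ring
    · rw [if_neg (asymm h), if_pos h]; ring
  case rest =>
    intro G hG hGne
    obtain ⟨hGu, hGv⟩ := hGne
    have hGc : G.card = k := (Finset.mem_powersetCard.mp hG).2
    have hGS : G ⊆ S := (Finset.mem_powersetCard.mp hG).1
    have : incSign G F = 0 := by
      apply incSign_eq_zero
      rintro ⟨hFG, -⟩
      have hsub : G \ F ⊆ S \ F := Finset.sdiff_subset_sdiff hGS (le_refl F)
      have hcard : (G \ F).card = 1 := by rw [Finset.card_sdiff_of_subset hFG, hGc, hFc]; omega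
      obtain ⟨w, hw⟩ := Finset.card_eq_one.mp hcard
      have hGeq : G = insert w F := by
        have : G = F ∪ (G \ F) := by rw [Finset.union_sdiff_of_subset hFG]
        rw [this, hw, Finset.union_comm, ← Finset.insert_eq]
      have hwmem : w ∈ S \ F := hsub (hw ▸ Finset.mem_singleton_self w)
      rw [hSF] at hwmem
      rcases Finset.mem_insert.mp hwmem with h | h
      · exact hGu (hGeq.trans (by rw [h]))
      · exact hGv (hGeq.trans (by rw [Finset.mem_singleton.mp h]))
    rw [this, mul_zero]

lemma cocycle (k : ℕ) (hk : 1 ≤ k) (b c : Finset (Fin n) → ℝ)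
    (hb : ∀ H : Finset (Fin n), H.card = k →
      b H = ∑ F ∈ H.powersetCard (k - 1), (incSign H F : ℝ) * c F)
    (S : Finset (Fin n)) (hS : S.card = k + 1) :
    ∑ G ∈ S.powersetCard k, (incSign S G : ℝ) * b G = 0 := by
  have step : ∀ G ∈ S.powersetCard k, (incSign S G : ℝ) * b G
      = ∑ F ∈ S.powersetCard (k - 1),
          ((incSign S G : ℝ) * (incSign G F : ℝ)) * c F := by
    intro G hG
    obtain ⟨hGS, hGc⟩ := Finset.mem_powersetCard.mp hG
    rw [hb G hGc, Finset.mul_sum]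
    rw [Finset.sum_subset (Finset.powersetCard_mono hGS) ?van]
    · exact Finset.sum_congr rfl (fun F _ => by ring)
    case van =>
      intro F hF hFG
      have : incSign G F = 0 := by
        apply incSign_eq_zero
        rintro ⟨hsub, hcard⟩
        exact hFG (Finset.mem_powersetCard.mpr ⟨hsub, (Finset.mem_powersetCard.mp hF).2⟩)
      rw [this]
      push_cast
      ring
  rw [Finset.sum_congr rfl step, Finset.sum_comm]
  apply Finset.sum_eq_zero
  intro F hF
  obtain ⟨hFS, hFc⟩ := Finset.mem_powersetCard.mp hF
  rw [← Finset.sum_mul]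
  have hz : ∑ G ∈ S.powersetCard k, (incSign S G : ℝ) * (incSign G F : ℝ) = 0 := by
    have := dd_zero S F k hk hFS hFc hS
    calc ∑ G ∈ S.powersetCard k, (incSign S G : ℝ) * (incSign G F : ℝ)
        = ((∑ G ∈ S.powersetCard k, incSign S G * incSign G F : ℤ) : ℝ) := by push_cast; rfl
      _ = 0 := by rw [this]; norm_num
  rw [hz, zero_mul]

end Stmt14

/-- For a `k`-complex on `[n]` with complete `(k−1)`-skeleton and a coboundary
`b ∈ B^{k−1}`, setting `h_b(F) = Σ_{v∉F} [F∪{v}:F] b(F∪{v})` for `(k−2)`-faces `F`,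
every `(k−1)`-face `H` satisfies `b(H) = (1/n) Σ_{F ⊂ H} [H:F] h_b(F)`. -/
theorem stmt14 (n k : ℕ) (hk : 1 ≤ k) (hkn : k ≤ n)
    (b : Finset (Fin n) → ℝ)
    (hb : ∃ c : Finset (Fin n) → ℝ, ∀ H : Finset (Fin n), H.card = k →
      b H = ∑ F ∈ H.powersetCard (k - 1), (incSign H F : ℝ) * c F)
    (hbF : Finset (Fin n) → ℝ)
    (hhbF : ∀ F : Finset (Fin n),
      hbF F = ∑ v ∈ Fᶜ, (incSign (insert v F) F : ℝ) * b (insert v F)) :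
    ∀ H : Finset (Fin n), H.card = k →
      b H = (1 / (n : ℝ)) * ∑ F ∈ H.powersetCard (k - 1), (incSign H F : ℝ) * hbF F := by
  classical
  obtain ⟨c, hc⟩ := hb
  intro H hH
  have hn : 0 < n := lt_of_lt_of_le hk hkn
  open Stmt14 in
  have key : ∑ F ∈ H.powersetCard (k - 1), (incSign H F : ℝ) * hbF F = (n : ℝ) * b H := by
    have step1 : ∀ F ∈ H.powersetCard (k - 1),
        (incSign H F : ℝ) * hbF F
          = b H + ∑ v ∈ Hᶜ, (incSign H F : ℝ) *
              ((incSign (insert v F) F : ℝ) * b (insert v F)) := by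
      intro F hF
      obtain ⟨hFH, hFc⟩ := Finset.mem_powersetCard.mp hF
      have hHc : H.card = F.card + 1 := by omega
      obtain ⟨u, huF, huH⟩ := Stmt14.exists_insert hFH hHc
      have huHm : u ∈ H := huH ▸ Finset.mem_insert_self u F
      have hcompl : Fᶜ = insert u Hᶜ := by
        ext x
        simp only [Finset.mem_compl, Finset.mem_insert, huH]
        constructor
        · intro hx
          by_cases hxu : x = u
          · exact Or.inl hxu
          · exact Or.inr (by simp [Finset.mem_insert, hxu, hx])
        · rintro (rfl | hx)
          · exact huF
          · exact fun hxF => hx (Or.inr hxF)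
      rw [hhbF F, hcompl, Finset.sum_insert (by simp [huHm]), mul_add, Finset.mul_sum]
      congr 1
      rw [← huH]
      have hIH : incSign H F = Stmt14.sgn F u := by
        rw [huH]; exact Stmt14.incSign_insert F u huF
      have hsq : (Stmt14.sgn F u : ℝ) * (Stmt14.sgn F u : ℝ) = 1 := by
        exact_mod_cast Stmt14.sgn_mul_self F u
      rw [hIH, ← mul_assoc, hsq, one_mul]
    rw [Finset.sum_congr rfl step1, Finset.sum_add_distrib]
    have hcard1 : (H.powersetCard (k - 1)).card = k := by
      rw [Finset.card_powersetCard, hH]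
      rcases Nat.exists_eq_add_of_le hk with ⟨m, hm⟩
      rw [hm, Nat.add_comm]
      simp [Nat.choose_succ_self_right]
    have hfirst : ∑ _F ∈ H.powersetCard (k - 1), b H = (k : ℝ) * b H := by
      rw [Finset.sum_const, hcard1, nsmul_eq_mul]
    rw [hfirst, Finset.sum_comm]
    have step2 : ∀ v ∈ Hᶜ, ∑ F ∈ H.powersetCard (k - 1),
        (incSign H F : ℝ) * ((incSign (insert v F) F : ℝ) * b (insert v F)) = b H := by
      intro v hv
      have hvH : v ∉ H := Finset.mem_compl.mp hv
      have hS : (insert v H).card = k + 1 := by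
        rw [Finset.card_insert_of_notMem hvH, hH]
      have t1 : ∀ F ∈ H.powersetCard (k - 1),
          (incSign H F : ℝ) * ((incSign (insert v F) F : ℝ) * b (insert v F))
            = -((incSign (insert v H) H : ℝ) *
                ((incSign (insert v H) (insert v F) : ℝ) * b (insert v F))) := by
        intro F hF
        obtain ⟨hFH, hFc⟩ := Finset.mem_powersetCard.mp hF
        have hHc : H.card = F.card + 1 := by omega
        have hid := Stmt14.sign_identity F H v hFH hHc hvH
        have hcast : (incSign H F : ℝ) * (incSign (insert v F) F : ℝ)
            = -((incSign (insert v H) H : ℝ) * (incSign (insert v H) (insert v F) : ℝ)) := by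
          exact_mod_cast hid
        rw [← mul_assoc, hcast]; ring
      rw [Finset.sum_congr rfl t1, Finset.sum_neg_distrib, ← Finset.mul_sum]
      have reindex : ∑ F ∈ H.powersetCard (k - 1),
          (incSign (insert v H) (insert v F) : ℝ) * b (insert v F)
          = ∑ G ∈ ((insert v H).powersetCard k).erase H, (incSign (insert v H) G : ℝ) * b G := by
        apply Finset.sum_nbij' (i := fun F => insert v F) (j := fun G => G.erase v)
        · intro F hF
          obtain ⟨hFH, hFc⟩ := Finset.mem_powersetCard.mp hF
          have hvF : v ∉ F := fun h => hvH (hFH h)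
          refine Finset.mem_erase.mpr ⟨?_, ?_⟩
          · intro h
            exact hvH (h ▸ Finset.mem_insert_self v F)
          · refine Finset.mem_powersetCard.mpr ⟨Finset.insert_subset_insert v hFH, ?_⟩
            rw [Finset.card_insert_of_notMem hvF, hFc]; omega
        · intro G hG
          obtain ⟨hGne, hGm⟩ := Finset.mem_erase.mp hG
          obtain ⟨hGS, hGc⟩ := Finset.mem_powersetCard.mp hGm
          have hvG : v ∈ G := by
            by_contra hvG
            apply hGne
            apply Finset.eq_of_subset_of_card_le
            · intro x hx
              rcases Finset.mem_insert.mp (hGS hx) with h | h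
              · exact absurd (h ▸ hx) hvG
              · exact h
            · rw [hGc, hH]
          refine Finset.mem_powersetCard.mpr ⟨?_, ?_⟩
          · intro x hx
            obtain ⟨hxv, hxG⟩ := Finset.mem_erase.mp hx
            rcases Finset.mem_insert.mp (hGS hxG) with h | h
            · exact absurd h hxv
            · exact h
          · rw [Finset.card_erase_of_mem hvG, hGc]
        · intro F hF
          obtain ⟨hFH, _⟩ := Finset.mem_powersetCard.mp hF
          exact Finset.erase_insert (fun h => hvH (hFH h))
        · intro G hG
          obtain ⟨hGne, hGm⟩ := Finset.mem_erase.mp hG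
          obtain ⟨hGS, hGc⟩ := Finset.mem_powersetCard.mp hGm
          have hvG : v ∈ G := by
            by_contra hvG
            apply hGne
            apply Finset.eq_of_subset_of_card_le
            · intro x hx
              rcases Finset.mem_insert.mp (hGS hx) with h | h
              · exact absurd (h ▸ hx) hvG
              · exact h
            · rw [hGc, hH]
          exact Finset.insert_erase hvG
        · intro F _
          rfl
      rw [reindex]
      have total : ∑ G ∈ (insert v H).powersetCard k, (incSign (insert v H) G : ℝ) * b G = 0 :=
        Stmt14.cocycle k hk b c hc (insert v H) hS
      have hHS : H ∈ (insert v H).powersetCard k :=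
        Finset.mem_powersetCard.mpr ⟨Finset.subset_insert _ _, hH⟩
      have erase_eq : ∑ G ∈ ((insert v H).powersetCard k).erase H,
          (incSign (insert v H) G : ℝ) * b G = -((incSign (insert v H) H : ℝ) * b H) := by
        have h := Finset.sum_erase_add ((insert v H).powersetCard k)
          (fun G => (incSign (insert v H) G : ℝ) * b G) hHS
        rw [total] at h
        have h2 : (∑ G ∈ ((insert v H).powersetCard k).erase H,
            (incSign (insert v H) G : ℝ) * b G) + (incSign (insert v H) H : ℝ) * b H = 0 := h
        linarith
      rw [erase_eq]
      have hsq : (incSign (insert v H) H : ℝ) * (incSign (insert v H) H : ℝ) = 1 := by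
        rw [Stmt14.incSign_insert H v hvH]
        exact_mod_cast Stmt14.sgn_mul_self H v
      rw [mul_neg, neg_neg, ← mul_assoc, hsq, one_mul]
    rw [Finset.sum_congr rfl step2, Finset.sum_const, Finset.card_compl, Fintype.card_fin, hH,
      nsmul_eq_mul]
    have : ((n - k : ℕ) : ℝ) = (n : ℝ) - (k : ℝ) := by
      push_cast [Nat.cast_sub hkn]; ring
    rw [this]; ring
  rw [key]
  have hn' : (n : ℝ) ≠ 0 := Nat.cast_ne_zero.mpr (by omega)
  field_simp
end

section
/- Let X be a k-complex on [n] with complete (k−1)-skeleton, d > 0, and E = D_{k−1}(X) − d·I the diagonal matrix of degree deviations. If ‖E δ_{k−2} e_F‖ ≤ f·‖δ_{k−2} e_F‖ for every (k−2)-face F, then ‖E b‖ ≤ k·f·‖b‖ for every b ∈ B^{k−1}(X;R). (The same conclusion holds for any diagonal matrix E.) -/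
open Finset

theorem Finset.sum_sum_erase_eq_zero_of_antisymm {α M : Type*} [DecidableEq α] [AddCommGroup M]
    [IsAddTorsionFree M] {s : Finset α} {g : α → α → M}
    (hg : ∀ u ∈ s, ∀ w ∈ s, u ≠ w → g w u = -g u w) :
    ∑ u ∈ s, ∑ w ∈ s.erase u, g u w = 0 := by
  rw [← self_eq_neg]
  calc ∑ u ∈ s, ∑ w ∈ s.erase u, g u w
      = ∑ w ∈ s, ∑ u ∈ s.erase w, g u w :=
        sum_comm' fun u w => by simp only [mem_erase]; tauto
    _ = -∑ u ∈ s, ∑ w ∈ s.erase u, g u w := by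
        simp only [← sum_neg_distrib]
        refine sum_congr rfl fun w hw => sum_congr rfl fun u hu => ?_
        rw [mem_erase] at hu
        exact hg w hw u hu.2 hu.1.symm

theorem Finset.powersetCard_card_sub_one {α : Type*} [DecidableEq α] {s : Finset α}
    (hs : s.Nonempty) : s.powersetCard (#s - 1) = s.image s.erase := by
  refine (eq_of_subset_of_card_le (fun t ht => ?_) ?_).symm
  · obtain ⟨a, ha, rfl⟩ := mem_image.1 ht
    exact mem_powersetCard.2 ⟨erase_subset a s, card_erase_of_mem ha⟩
  · rw [card_powersetCard, Nat.choose_symm hs.card_pos, Nat.choose_one_right,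
      card_image_of_injOn s.erase_injOn]

theorem Finset.sum_powersetCard_succ_sum_mem {α M : Type*} [Fintype α] [DecidableEq α]
    [AddCommMonoid M] (m : ℕ) (g : Finset α → α → M) :
    ∑ H ∈ powersetCard (m + 1) univ, ∑ u ∈ H, g H u =
      ∑ F ∈ powersetCard m univ, ∑ v ∈ Fᶜ, g (insert v F) v := by
  rw [sum_sigma', sum_sigma']
  refine sum_bij' (fun p _ => (⟨p.1.erase p.2, p.2⟩ : Σ _ : Finset α, α))
    (fun p _ => (⟨insert p.2 p.1, p.2⟩ : Σ _ : Finset α, α)) ?_ ?_ ?_ ?_ ?_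
  · rintro ⟨H, u⟩ hp
    simp only [mem_sigma, mem_powersetCard_univ, mem_compl] at hp ⊢
    exact ⟨by rw [card_erase_of_mem hp.2, hp.1, Nat.add_sub_cancel], notMem_erase _ _⟩
  · rintro ⟨F, v⟩ hp
    simp only [mem_sigma, mem_powersetCard_univ, mem_compl] at hp ⊢
    exact ⟨by rw [card_insert_of_notMem hp.2, hp.1], mem_insert_self _ _⟩
  · rintro ⟨H, u⟩ hp
    simp only [mem_sigma] at hp
    rw [insert_erase hp.2]
  · rintro ⟨F, v⟩ hp
    simp only [mem_sigma, mem_compl] at hp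
    rw [erase_insert hp.2]
  · rintro ⟨H, u⟩ hp
    simp only [mem_sigma] at hp
    rw [insert_erase hp.2]

namespace incSign

variable {n : ℕ} {A F H : Finset (Fin n)} {u v w : Fin n}

theorem insert_of_notMem (hv : v ∉ A) :
    incSign (insert v A) A = (-1) ^ #{x ∈ A | x < v} := by
  rw [incSign, if_pos ⟨subset_insert _ _, card_insert_of_notMem hv⟩, insert_sdiff_of_notMem _ hv,
    sdiff_self, bot_eq_empty, insert_empty, sum_singleton]

theorem cast_insert_sq (hv : v ∉ A) : (incSign (insert v A) A : ℝ) ^ 2 = 1 := by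
  rw [insert_of_notMem hv, Int.cast_pow, Int.cast_neg, Int.cast_one, ← pow_mul, mul_comm, pow_mul,
    neg_one_sq, one_pow]

theorem cast_erase_sq (hu : u ∈ H) : (incSign H (H.erase u) : ℝ) ^ 2 = 1 := by
  simpa only [insert_erase hu] using cast_insert_sq (notMem_erase u H)

theorem insert_insert (hu : u ∉ A) (hv : v ∉ A) (huv : u ≠ v) :
    incSign (insert v (insert u A)) (insert u A) =
      (if u < v then -1 else 1) * incSign (insert v A) A := by
  have hv' : v ∉ insert u A := by simp [hv, huv.symm]
  rw [insert_of_notMem hv', insert_of_notMem hv, filter_insert]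
  split_ifs
  · rw [card_insert_of_notMem (fun h => hu (mem_filter.1 h).1), pow_succ, mul_comm]
  · rw [one_mul]

private theorem ite_lt_swap (huv : u ≠ v) :
    (if v < u then (-1 : ℤ) else 1) = -(if u < v then -1 else 1) := by
  rcases huv.lt_or_gt with h | h
  · rw [if_pos h, if_neg h.not_gt, neg_neg]
  · rw [if_neg h.not_gt, if_pos h]

/-- The two paths down a square of faces carry opposite signs; this is `δ ∘ δ = 0`. -/
theorem erase_mul_erase (hu : u ∈ H) (hw : w ∈ H) (huw : u ≠ w) :
    incSign H (H.erase u) * incSign (H.erase u) ((H.erase u).erase w) =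
      -(incSign H (H.erase w) * incSign (H.erase w) ((H.erase w).erase u)) := by
  obtain ⟨A, huA, hwA, rfl⟩ : ∃ A, u ∉ A ∧ w ∉ A ∧ H = insert u (insert w A) :=
    ⟨(H.erase u).erase w, by simp, by simp,
      by rw [insert_erase (mem_erase.2 ⟨huw.symm, hw⟩), insert_erase hu]⟩
  simp only [erase_insert_eq_erase, erase_insert huA, erase_insert hwA, erase_insert_of_ne huw,
    erase_insert_of_ne huw.symm, erase_eq_of_notMem huA]
  rw [insert_insert hwA huA huw.symm, insert_comm u w, insert_insert huA hwA huw,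
    ite_lt_swap huw]
  ring

/-- The sign identity behind `∂ ∘ δ + δ ∘ ∂ = n`: the off-diagonal terms cancel. -/
theorem insert_mul_insert_erase (hu : u ∈ F) (hv : v ∉ F) :
    incSign (insert v F) F * incSign (insert v F) (insert v (F.erase u)) =
      -(incSign F (F.erase u) * incSign (insert v (F.erase u)) (F.erase u)) := by
  obtain ⟨A, huA, rfl⟩ : ∃ A, u ∉ A ∧ F = insert u A :=
    ⟨F.erase u, notMem_erase u F, (insert_erase hu).symm⟩
  have hvA : v ∉ A := fun h => hv (mem_insert_of_mem h)
  have huv : u ≠ v := fun h => hv (h ▸ mem_insert_self u A)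
  rw [erase_insert huA, insert_insert huA hvA huv, insert_comm v u, insert_insert hvA huA huv.symm,
    ite_lt_swap huv]
  split_ifs <;> ring

end incSign

namespace FullSimplex

variable {n : ℕ}

noncomputable def coboundary (a : Finset (Fin n) → ℝ) (H : Finset (Fin n)) : ℝ :=
  ∑ u ∈ H, (incSign H (H.erase u) : ℝ) * a (H.erase u)

noncomputable def boundary (a : Finset (Fin n) → ℝ) (G : Finset (Fin n)) : ℝ :=
  ∑ v ∈ Gᶜ, (incSign (insert v G) G : ℝ) * a (insert v G)

theorem sum_powersetCard_card_sub_one_eq_coboundary (a : Finset (Fin n) → ℝ) (H : Finset (Fin n)) :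
    ∑ F ∈ H.powersetCard (#H - 1), (incSign H F : ℝ) * a F = coboundary a H := by
  rcases H.eq_empty_or_nonempty with rfl | hH
  · simp [incSign, coboundary]
  · rw [powersetCard_card_sub_one hH, sum_image (erase_injOn H), coboundary]

theorem coboundary_coboundary (a : Finset (Fin n) → ℝ) (H : Finset (Fin n)) :
    coboundary (coboundary a) H = 0 := by
  simp only [coboundary, mul_sum]
  refine sum_sum_erase_eq_zero_of_antisymm fun u hu w hw huw => ?_
  have hsign := congrArg (Int.cast (R := ℝ)) (incSign.erase_mul_erase hu hw huw)
  push_cast at hsign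
  rw [erase_right_comm (a := w)] at hsign ⊢
  linear_combination a ((H.erase u).erase w) * hsign

theorem boundary_coboundary_apply (a : Finset (Fin n) → ℝ) (F : Finset (Fin n)) :
    boundary (coboundary a) F = #Fᶜ * a F + ∑ v ∈ Fᶜ, ∑ u ∈ F, (incSign (insert v F) F : ℝ) *
      ((incSign (insert v F) (insert v (F.erase u)) : ℝ) * a (insert v (F.erase u))) := by
  have h : ∀ v ∈ Fᶜ, (incSign (insert v F) F : ℝ) * coboundary a (insert v F) =
      a F + ∑ u ∈ F, (incSign (insert v F) F : ℝ) *
        ((incSign (insert v F) (insert v (F.erase u)) : ℝ) * a (insert v (F.erase u))) := by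
    intro v hv
    have hvF : v ∉ F := mem_compl.1 hv
    rw [coboundary, sum_insert hvF, erase_insert hvF, mul_add, ← mul_assoc, ← sq,
      incSign.cast_insert_sq hvF, one_mul, mul_sum]
    refine congrArg _ (sum_congr rfl fun u hu => ?_)
    rw [erase_insert_of_ne (ne_of_mem_of_not_mem hu hvF).symm]
  rw [boundary, sum_congr rfl h, sum_add_distrib, sum_const, nsmul_eq_mul]

theorem coboundary_boundary_apply (a : Finset (Fin n) → ℝ) (F : Finset (Fin n)) :
    coboundary (boundary a) F = #F * a F + ∑ u ∈ F, ∑ v ∈ Fᶜ, (incSign F (F.erase u) : ℝ) *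
      ((incSign (insert v (F.erase u)) (F.erase u) : ℝ) * a (insert v (F.erase u))) := by
  have h : ∀ u ∈ F, (incSign F (F.erase u) : ℝ) * boundary a (F.erase u) =
      a F + ∑ v ∈ Fᶜ, (incSign F (F.erase u) : ℝ) *
        ((incSign (insert v (F.erase u)) (F.erase u) : ℝ) * a (insert v (F.erase u))) := by
    intro u hu
    rw [boundary, compl_erase, sum_insert (notMem_compl.2 hu), insert_erase hu, mul_add,
      ← mul_assoc, ← sq, incSign.cast_erase_sq hu, one_mul, mul_sum]
  rw [coboundary, sum_congr rfl h, sum_add_distrib, sum_const, nsmul_eq_mul]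

theorem boundary_coboundary_add_coboundary_boundary (a : Finset (Fin n) → ℝ)
    (F : Finset (Fin n)) : boundary (coboundary a) F + coboundary (boundary a) F = n * a F := by
  have hcross : ∀ u ∈ F, ∀ v ∈ Fᶜ,
      (incSign (insert v F) F : ℝ) *
          ((incSign (insert v F) (insert v (F.erase u)) : ℝ) * a (insert v (F.erase u))) +
        (incSign F (F.erase u) : ℝ) *
          ((incSign (insert v (F.erase u)) (F.erase u) : ℝ) * a (insert v (F.erase u))) = 0 := by
    intro u hu v hv
    have hsign := congrArg (Int.cast (R := ℝ)) (incSign.insert_mul_insert_erase hu (mem_compl.1 hv))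
    push_cast at hsign
    linear_combination a (insert v (F.erase u)) * hsign
  have hcard : (#Fᶜ : ℝ) + #F = n := by
    exact_mod_cast (card_compl_add_card F).trans (Fintype.card_fin n)
  rw [boundary_coboundary_apply, coboundary_boundary_apply, sum_comm (s := Fᶜ), add_add_add_comm,
    ← add_mul, hcard, ← sum_add_distrib, sum_eq_zero fun u hu => ?_, add_zero]
  rw [← sum_add_distrib]
  exact sum_eq_zero (hcross u hu)

theorem coboundary_boundary_coboundary (c : Finset (Fin n) → ℝ) (H : Finset (Fin n)) :
    coboundary (boundary (coboundary c)) H = n * coboundary c H := by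
  have h := boundary_coboundary_add_coboundary_boundary (coboundary c) H
  rwa [show coboundary (coboundary c) = 0 from funext (coboundary_coboundary c), boundary,
    sum_eq_zero fun _ _ => by rw [Pi.zero_apply, mul_zero], zero_add] at h

theorem sq_coboundary_le (a : Finset (Fin n) → ℝ) (H : Finset (Fin n)) :
    coboundary a H ^ 2 ≤ #H * ∑ u ∈ H, a (H.erase u) ^ 2 := by
  calc coboundary a H ^ 2
      ≤ #H * ∑ u ∈ H, ((incSign H (H.erase u) : ℝ) * a (H.erase u)) ^ 2 :=
        sq_sum_le_card_mul_sum_sq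
    _ = #H * ∑ u ∈ H, a (H.erase u) ^ 2 := by
        refine congrArg _ (sum_congr rfl fun u hu => ?_)
        rw [mul_pow, incSign.cast_erase_sq hu, one_mul]

theorem sq_boundary_le (a : Finset (Fin n) → ℝ) (G : Finset (Fin n)) :
    boundary a G ^ 2 ≤ #Gᶜ * ∑ v ∈ Gᶜ, a (insert v G) ^ 2 := by
  calc boundary a G ^ 2
      ≤ #Gᶜ * ∑ v ∈ Gᶜ, ((incSign (insert v G) G : ℝ) * a (insert v G)) ^ 2 :=
        sq_sum_le_card_mul_sum_sq
    _ = #Gᶜ * ∑ v ∈ Gᶜ, a (insert v G) ^ 2 := by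
        refine congrArg _ (sum_congr rfl fun v hv => ?_)
        rw [mul_pow, incSign.cast_insert_sq (mem_compl.1 hv), one_mul]

theorem sum_sq_boundary_le (b : Finset (Fin n) → ℝ) (m : ℕ) :
    ∑ F ∈ powersetCard m univ, boundary b F ^ 2 ≤
      ((n : ℝ) - m) * (m + 1) * ∑ H ∈ powersetCard (m + 1) univ, b H ^ 2 := by
  have hcard : ∀ F ∈ powersetCard m (univ : Finset (Fin n)), (#Fᶜ : ℝ) = n - m := by
    intro F hF
    rw [mem_powersetCard_univ] at hF
    have hm : m ≤ n := by simpa [hF] using card_le_univ F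
    rw [card_compl, Fintype.card_fin, hF, Nat.cast_sub hm]
  calc ∑ F ∈ powersetCard m univ, boundary b F ^ 2
      ≤ ∑ F ∈ powersetCard m univ, ((n : ℝ) - m) * ∑ v ∈ Fᶜ, b (insert v F) ^ 2 :=
        sum_le_sum fun F hF => hcard F hF ▸ sq_boundary_le b F
    _ = ((n : ℝ) - m) * ∑ H ∈ powersetCard (m + 1) univ, ∑ _u ∈ H, b H ^ 2 := by
        rw [← mul_sum, sum_powersetCard_succ_sum_mem m fun H _ => b H ^ 2]
    _ = ((n : ℝ) - m) * (m + 1) * ∑ H ∈ powersetCard (m + 1) univ, b H ^ 2 := by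
        rw [mul_assoc, mul_sum (a := (m : ℝ) + 1)]
        refine congrArg _ (sum_congr rfl fun H hH => ?_)
        rw [sum_const, mem_powersetCard_univ.1 hH, nsmul_eq_mul, Nat.cast_succ]

theorem sum_sq_mul_coboundary_le (E : Finset (Fin n) → ℝ) (m : ℕ) (L : ℝ)
    (hL : ∀ F : Finset (Fin n), #F = m → ∑ v ∈ Fᶜ, E (insert v F) ^ 2 ≤ L)
    (h : Finset (Fin n) → ℝ) :
    ∑ H ∈ powersetCard (m + 1) univ, (E H * coboundary h H) ^ 2 ≤
      (m + 1) * L * ∑ F ∈ powersetCard m univ, h F ^ 2 := by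
  calc ∑ H ∈ powersetCard (m + 1) univ, (E H * coboundary h H) ^ 2
      ≤ ∑ H ∈ powersetCard (m + 1) univ, E H ^ 2 * ((m + 1) * ∑ u ∈ H, h (H.erase u) ^ 2) := by
        refine sum_le_sum fun H hH => ?_
        rw [mul_pow]
        refine mul_le_mul_of_nonneg_left ?_ (sq_nonneg _)
        simpa [mem_powersetCard_univ.1 hH] using sq_coboundary_le h H
    _ = (m + 1) * ∑ H ∈ powersetCard (m + 1) univ, ∑ u ∈ H, E H ^ 2 * h (H.erase u) ^ 2 := by
        rw [mul_sum]
        refine sum_congr rfl fun H _ => ?_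
        rw [mul_sum, mul_sum, mul_sum]
        exact sum_congr rfl fun u _ => by ring
    _ = (m + 1) * ∑ F ∈ powersetCard m univ, (∑ v ∈ Fᶜ, E (insert v F) ^ 2) * h F ^ 2 := by
        rw [sum_powersetCard_succ_sum_mem m fun H u => E H ^ 2 * h (H.erase u) ^ 2]
        congr 1
        refine sum_congr rfl fun F _ => ?_
        rw [sum_mul]
        exact sum_congr rfl fun v hv => by rw [erase_insert (mem_compl.1 hv)]
    _ ≤ (m + 1) * L * ∑ F ∈ powersetCard m univ, h F ^ 2 := by
        rw [mul_assoc, mul_sum (a := L)]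
        refine mul_le_mul_of_nonneg_left (sum_le_sum fun F hF => ?_) (by positivity)
        exact mul_le_mul_of_nonneg_right (hL F (mem_powersetCard_univ.1 hF)) (sq_nonneg _)

theorem sq_mul_sum_sq_mul_le_of_eq_coboundary (E : Finset (Fin n) → ℝ) (m : ℕ) {L : ℝ}
    (hL₀ : 0 ≤ L) (hL : ∀ F : Finset (Fin n), #F = m → ∑ v ∈ Fᶜ, E (insert v F) ^ 2 ≤ L)
    {b c : Finset (Fin n) → ℝ} (hb : ∀ H ∈ powersetCard (m + 1) univ, b H = coboundary c H) :
    (n : ℝ) ^ 2 * ∑ H ∈ powersetCard (m + 1) univ, (E H * b H) ^ 2 ≤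
      (m + 1) ^ 2 * ((n : ℝ) - m) * L * ∑ H ∈ powersetCard (m + 1) univ, b H ^ 2 := by
  have hb_sq : ∑ H ∈ powersetCard (m + 1) univ, b H ^ 2 =
      ∑ H ∈ powersetCard (m + 1) univ, coboundary c H ^ 2 :=
    sum_congr rfl fun H hH => by rw [hb H hH]
  calc (n : ℝ) ^ 2 * ∑ H ∈ powersetCard (m + 1) univ, (E H * b H) ^ 2
      = ∑ H ∈ powersetCard (m + 1) univ, (E H * coboundary (boundary (coboundary c)) H) ^ 2 := by
        rw [mul_sum]
        exact sum_congr rfl fun H hH => by rw [hb H hH, coboundary_boundary_coboundary]; ring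
    _ ≤ (m + 1) * L * ∑ F ∈ powersetCard m univ, boundary (coboundary c) F ^ 2 :=
        sum_sq_mul_coboundary_le E m L hL _
    _ ≤ (m + 1) * L * (((n : ℝ) - m) * (m + 1) *
          ∑ H ∈ powersetCard (m + 1) univ, coboundary c H ^ 2) :=
        mul_le_mul_of_nonneg_left (sum_sq_boundary_le _ m) (by positivity)
    _ = (m + 1) ^ 2 * ((n : ℝ) - m) * L * ∑ H ∈ powersetCard (m + 1) univ, b H ^ 2 := by
        rw [hb_sq]; ring

theorem sqrt_sum_sq_mul_le_of_eq_coboundary (E : Finset (Fin n) → ℝ) (m : ℕ) {f : ℝ}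
    (hmn : (m : ℝ) + 1 ≤ n) (hf : 0 ≤ f)
    (hL : ∀ F : Finset (Fin n), #F = m → ∑ v ∈ Fᶜ, E (insert v F) ^ 2 ≤ f ^ 2 * (n - m))
    {b c : Finset (Fin n) → ℝ} (hb : ∀ H ∈ powersetCard (m + 1) univ, b H = coboundary c H) :
    √(∑ H ∈ powersetCard (m + 1) univ, (E H * b H) ^ 2) ≤
      ((m : ℝ) + 1) * f * √(∑ H ∈ powersetCard (m + 1) univ, b H ^ 2) := by
  have key := sq_mul_sum_sq_mul_le_of_eq_coboundary E m (L := f ^ 2 * (n - m))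
    (mul_nonneg (sq_nonneg f) (by linarith)) hL hb
  set S := ∑ H ∈ powersetCard (m + 1) univ, b H ^ 2
  have hS : 0 ≤ S := sum_nonneg fun H _ => sq_nonneg (b H)
  have hsq : ∑ H ∈ powersetCard (m + 1) univ, (E H * b H) ^ 2 ≤ (((m : ℝ) + 1) * f) ^ 2 * S := by
    refine le_of_mul_le_mul_left (key.trans ?_) (pow_pos (by linarith) 2)
    calc ((m : ℝ) + 1) ^ 2 * (n - m) * (f ^ 2 * (n - m)) * S
        = (((m : ℝ) + 1) * f) ^ 2 * S * (n - m) ^ 2 := by ring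
      _ ≤ (((m : ℝ) + 1) * f) ^ 2 * S * n ^ 2 := by
        gcongr <;> linarith
      _ = n ^ 2 * ((((m : ℝ) + 1) * f) ^ 2 * S) := by ring
  calc √(∑ H ∈ powersetCard (m + 1) univ, (E H * b H) ^ 2)
      ≤ √((((m : ℝ) + 1) * f) ^ 2 * S) := Real.sqrt_le_sqrt hsq
    _ = ((m : ℝ) + 1) * f * √S := by
        rw [Real.sqrt_mul (sq_nonneg _), Real.sqrt_sq (by positivity)]

end FullSimplex

open FullSimplex

theorem stmt16_general (n k : ℕ) (hk : 1 ≤ k) (hkn : k ≤ n)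
    (deg : Finset (Fin n) → ℕ)
    (d : ℝ) (f : ℝ)
    (hlinks : ∀ F : Finset (Fin n), F.card = k - 1 →
      Real.sqrt (∑ v ∈ Fᶜ, ((deg (insert v F) : ℝ) - d) ^ 2)
        ≤ f * Real.sqrt ((n : ℝ) - k + 1))
    (b : Finset (Fin n) → ℝ)
    (hb : ∃ c : Finset (Fin n) → ℝ, ∀ H : Finset (Fin n), H.card = k →
      b H = ∑ F ∈ H.powersetCard (k - 1), (incSign H F : ℝ) * c F) :
    Real.sqrt (∑ H ∈ (Finset.univ : Finset (Fin n)).powersetCard k,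
        (((deg H : ℝ) - d) * b H) ^ 2)
      ≤ (k : ℝ) * f *
        Real.sqrt (∑ H ∈ (Finset.univ : Finset (Fin n)).powersetCard k, b H ^ 2) := by
  obtain ⟨c, hc⟩ := hb
  obtain ⟨m, rfl⟩ : ∃ m, k = m + 1 := ⟨k - 1, by omega⟩
  have hmn : (m : ℝ) + 1 ≤ n := by exact_mod_cast hkn
  have hnm : (n : ℝ) - ((m + 1 : ℕ) : ℝ) + 1 = n - m := by push_cast; ring
  rw [hnm, Nat.add_sub_cancel] at hlinks
  have hf : 0 ≤ f := by
    obtain ⟨F₀, -, hF₀⟩ := exists_subset_card_eq (s := (univ : Finset (Fin n))) (n := m)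
      (by rw [card_univ, Fintype.card_fin]; omega)
    exact nonneg_of_mul_nonneg_left ((Real.sqrt_nonneg _).trans (hlinks F₀ hF₀))
      (Real.sqrt_pos.2 (by linarith))
  have hL : ∀ F : Finset (Fin n), #F = m →
      ∑ v ∈ Fᶜ, ((deg (insert v F) : ℝ) - d) ^ 2 ≤ f ^ 2 * (n - m) := fun F hF => by
    rw [← Real.sq_sqrt (by linarith : (0 : ℝ) ≤ n - m), ← mul_pow]
    exact (Real.sqrt_le_left (by positivity)).1 (hlinks F hF)
  have hb_eq : ∀ H ∈ powersetCard (m + 1) univ, b H = coboundary c H := fun H hH => by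
    rw [hc H (mem_powersetCard_univ.1 hH), ← mem_powersetCard_univ.1 hH,
      sum_powersetCard_card_sub_one_eq_coboundary]
  simpa only [Nat.cast_succ] using
    sqrt_sum_sq_mul_le_of_eq_coboundary (fun H => (deg H : ℝ) - d) m hmn hf hL hb_eq

/-- Let `X` be a `k`-complex on `[n]` with complete `(k−1)`-skeleton (with set `K` of
`k`-faces) and `E = D_{k−1} − d·I` the diagonal matrix of degree deviations. If
`‖E δ_{k−2} e_F‖ ≤ f·‖δ_{k−2} e_F‖` for every `(k−2)`-face `F` (note
`‖Eδe_F‖² = Σ_{v∉F}(deg(F∪{v})−d)²` and `‖δe_F‖ = √(n−k+1)`), then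
`‖E b‖ ≤ k·f·‖b‖` for every coboundary `b ∈ B^{k−1}(X;ℝ)`. -/
theorem stmt16 (n k : ℕ) (hk : 1 ≤ k) (hkn : k ≤ n)
    (K : Finset (Finset (Fin n))) (hK : ∀ H ∈ K, H.card = k + 1)
    (deg : Finset (Fin n) → ℕ) (hdeg : ∀ H, deg H = (K.filter (fun H' => H ⊆ H')).card)
    (d : ℝ) (hd : 0 < d) (f : ℝ)
    (hlinks : ∀ F : Finset (Fin n), F.card = k - 1 →
      Real.sqrt (∑ v ∈ Fᶜ, ((deg (insert v F) : ℝ) - d) ^ 2)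
        ≤ f * Real.sqrt ((n : ℝ) - k + 1))
    (b : Finset (Fin n) → ℝ)
    (hb : ∃ c : Finset (Fin n) → ℝ, ∀ H : Finset (Fin n), H.card = k →
      b H = ∑ F ∈ H.powersetCard (k - 1), (incSign H F : ℝ) * c F) :
    Real.sqrt (∑ H ∈ (Finset.univ : Finset (Fin n)).powersetCard k,
        (((deg H : ℝ) - d) * b H) ^ 2)
      ≤ (k : ℝ) * f *
        Real.sqrt (∑ H ∈ (Finset.univ : Finset (Fin n)).powersetCard k, b H ^ 2) :=
  stmt16_general n k hk hkn deg d f hlinks b hb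
end
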